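/- Let J be a finite set, v̄_j > 0, φ_j := φ_{v̄_j}, ψ_j(z) := v̄_j/(e(1−z)²) for 0 ≤ z < 1 − 1/e and 0 for 1 − 1/e ≤ z ≤ 1; let Q_j : [0,1] → [0,1] be measurable and U₀ ≥ 0, and set T(z) = Σ_{j∈J} φ_j(z)·Q_j(z) − U₀ − ∫_0^z Σ_{j∈J} ψ_j(s)·Q_j(s) ds. Then ∫_0^1 Σ_{j∈J} φ_j(z) dz − ∫_0^1 T(z) dz ≥ Σ_{j∈J} v̄_j / e. -/

import Mathlib

/-- The equal-revenue quantile function: `φ_{v̄}(z) = v̄/(e(1−z))` for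
`z < 1 − 1/e` and `φ_{v̄}(z) = v̄` for `z ≥ 1 − 1/e`. -/
noncomputable def erQuantile (vb z : ℝ) : ℝ :=
  if z < 1 - 1 / Real.exp 1 then vb / (Real.exp 1 * (1 - z)) else vb

/-- Its derivative off `z = 1 − 1/e`: `ψ(z) = v̄/(e(1−z)²)` for `z < 1 − 1/e`
and `0` for `z ≥ 1 − 1/e`. -/
noncomputable def erQuantileDeriv (vb z : ℝ) : ℝ :=
  if z < 1 - 1 / Real.exp 1 then vb / (Real.exp 1 * (1 - z) ^ 2) else 0

/-!
The primitive of an integrable function is absolutely continuous, so integrating by parts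
against `z - 1` turns the expected revenue `∫₀¹ T` into
`∫₀¹ Σⱼ (φⱼ(z) − (1 − z) ψⱼ(z)) Qⱼ(z) dz − U₀`.
For the equal-revenue quantile function this marginal revenue vanishes below `1 − 1/e` and equals
`v̄ⱼ` above it, so with `Qⱼ ≤ 1` the revenue is at most `Σⱼ v̄ⱼ/e`, while the full surplus is
`∫₀¹ Σⱼ φⱼ = Σⱼ 2 v̄ⱼ/e`.
-/

open MeasureTheory Set Real

lemma one_sub_one_div_exp_pos : 0 < 1 - 1 / exp 1 := by
  rw [sub_pos, div_lt_one (exp_pos 1)]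
  exact one_lt_exp_iff.mpr one_pos

lemma one_sub_one_div_exp_lt_one : 1 - 1 / exp 1 < 1 := by
  have : 0 < 1 / exp 1 := by positivity
  linarith

lemma one_lt_exp_mul_one_sub {z : ℝ} (hz : z < 1 - 1 / exp 1) : 1 < exp 1 * (1 - z) := by
  rw [← div_lt_iff₀' (exp_pos 1)]
  linarith

lemma erQuantile_nonneg {vb : ℝ} (hvb : 0 ≤ vb) (z : ℝ) : 0 ≤ erQuantile vb z := by
  unfold erQuantile
  split_ifs with hz
  · have := one_lt_exp_mul_one_sub hz
    exact div_nonneg hvb (by linarith)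
  · exact hvb

lemma erQuantile_le {vb : ℝ} (hvb : 0 ≤ vb) (z : ℝ) : erQuantile vb z ≤ vb := by
  unfold erQuantile
  split_ifs with hz
  · exact div_le_self hvb (one_lt_exp_mul_one_sub hz).le
  · exact le_rfl

lemma erQuantileDeriv_nonneg {vb : ℝ} (hvb : 0 ≤ vb) (z : ℝ) : 0 ≤ erQuantileDeriv vb z := by
  unfold erQuantileDeriv
  split_ifs
  · have := exp_pos 1
    positivity
  · exact le_rfl

lemma erQuantileDeriv_le {vb : ℝ} (hvb : 0 ≤ vb) (z : ℝ) :
    erQuantileDeriv vb z ≤ vb * exp 1 := by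
  unfold erQuantileDeriv
  split_ifs with hz
  · have hw := one_lt_exp_mul_one_sub hz
    have h1z : 0 < 1 - z := by linarith [one_sub_one_div_exp_lt_one]
    rw [div_le_iff₀ (by positivity)]
    nlinarith [mul_le_mul_of_nonneg_left (one_lt_mul hw.le hw).le hvb]
  · have := exp_pos 1
    positivity

lemma measurable_erQuantile (vb : ℝ) : Measurable (erQuantile vb) :=
  Measurable.ite measurableSet_Iio (by fun_prop) measurable_const

lemma measurable_erQuantileDeriv (vb : ℝ) : Measurable (erQuantileDeriv vb) :=
  Measurable.ite measurableSet_Iio (by fun_prop) measurable_const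

noncomputable def erVirtualValue (vb z : ℝ) : ℝ :=
  if z < 1 - 1 / exp 1 then 0 else vb

lemma erQuantile_sub_mul_deriv (vb z : ℝ) :
    erQuantile vb z - (1 - z) * erQuantileDeriv vb z = erVirtualValue vb z := by
  unfold erQuantile erQuantileDeriv erVirtualValue
  split_ifs with hz
  · have h1z : 1 - z ≠ 0 := by linarith [one_sub_one_div_exp_lt_one]
    field_simp
    ring
  · ring

lemma erVirtualValue_nonneg {vb : ℝ} (hvb : 0 ≤ vb) (z : ℝ) : 0 ≤ erVirtualValue vb z := by
  unfold erVirtualValue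
  split_ifs
  exacts [le_rfl, hvb]

lemma abs_erVirtualValue_le (vb z : ℝ) : |erVirtualValue vb z| ≤ |vb| := by
  unfold erVirtualValue
  split_ifs
  exacts [by simp, le_rfl]

lemma measurable_erVirtualValue (vb : ℝ) : Measurable (erVirtualValue vb) :=
  Measurable.ite measurableSet_Iio measurable_const measurable_const

lemma intervalIntegrable_of_abs_le {f : ℝ → ℝ} {a b C : ℝ} (hf : Measurable f)
    (hC : ∀ x ∈ uIoc a b, |f x| ≤ C) : IntervalIntegrable f volume a b :=
  (intervalIntegrable_const (c := C)).mono_fun' hf.aestronglyMeasurable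
    ((ae_restrict_iff' measurableSet_uIoc).mpr (ae_of_all _ hC))

lemma IntervalIntegrable.bdd_mul {f g : ℝ → ℝ} {a b C : ℝ} (hg : IntervalIntegrable g volume a b)
    (hf : Measurable f) (hC : ∀ x, |f x| ≤ C) :
    IntervalIntegrable (fun x => f x * g x) volume a b :=
  ⟨hg.1.bdd_mul hf.aestronglyMeasurable (ae_of_all _ hC),
    hg.2.bdd_mul hf.aestronglyMeasurable (ae_of_all _ hC)⟩

lemma intervalIntegrable_erQuantile {vb : ℝ} (hvb : 0 ≤ vb) (a b : ℝ) :
    IntervalIntegrable (erQuantile vb) volume a b :=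
  intervalIntegrable_of_abs_le (measurable_erQuantile vb) fun z _ =>
    abs_le.mpr ⟨by linarith [erQuantile_nonneg hvb z], erQuantile_le hvb z⟩

lemma intervalIntegrable_erVirtualValue (vb a b : ℝ) :
    IntervalIntegrable (erVirtualValue vb) volume a b :=
  intervalIntegrable_of_abs_le (measurable_erVirtualValue vb) fun z _ => abs_erVirtualValue_le vb z

lemma integral_inv_one_sub {c : ℝ} (hc : c < 1) : ∫ z in (0:ℝ)..c, (1 - z)⁻¹ = -log (1 - c) := by
  rw [intervalIntegral.integral_comp_sub_left (fun x => x⁻¹), sub_zero,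
    integral_inv_of_pos (by linarith) one_pos, one_div, log_inv]

lemma integral_erQuantile {vb : ℝ} (hvb : 0 ≤ vb) :
    ∫ z in (0:ℝ)..1, erQuantile vb z = 2 * vb / exp 1 := by
  set c := 1 - 1 / exp 1
  have hc0 : 0 < c := one_sub_one_div_exp_pos
  have hc1 : c < 1 := one_sub_one_div_exp_lt_one
  have hlow : ∫ z in (0:ℝ)..c, erQuantile vb z = vb / exp 1 := by
    have hEq : EqOn (erQuantile vb) (fun z => vb / exp 1 * (1 - z)⁻¹) (Ioo 0 c) := by
      intro z hz
      rw [erQuantile, if_pos hz.2, div_mul_eq_div_div, div_eq_mul_inv]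
    rw [intervalIntegral.integral_congr_Ioo_of_le hc0.le hEq, intervalIntegral.integral_const_mul,
      integral_inv_one_sub hc1, show 1 - c = (exp 1)⁻¹ by simp [c], log_inv, log_exp]
    ring
  have hhigh : ∫ z in c..1, erQuantile vb z = vb / exp 1 := by
    have hEq : EqOn (erQuantile vb) (fun _ => vb) (Ioo c 1) := fun z hz => by
      rw [erQuantile, if_neg (not_lt.mpr hz.1.le)]
    rw [intervalIntegral.integral_congr_Ioo_of_le hc1.le hEq, intervalIntegral.integral_const,
      smul_eq_mul]
    simp only [c]
    ring
  rw [← intervalIntegral.integral_add_adjacent_intervals (intervalIntegrable_erQuantile hvb 0 c)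
    (intervalIntegrable_erQuantile hvb c 1), hlow, hhigh]
  ring

lemma integral_erVirtualValue (vb : ℝ) :
    ∫ z in (0:ℝ)..1, erVirtualValue vb z = vb / exp 1 := by
  set c := 1 - 1 / exp 1
  have hc0 : 0 < c := one_sub_one_div_exp_pos
  have hc1 : c < 1 := one_sub_one_div_exp_lt_one
  have hlow : ∫ z in (0:ℝ)..c, erVirtualValue vb z = 0 := by
    have hEq : EqOn (erVirtualValue vb) (fun _ => 0) (Ioo 0 c) := fun z hz => by
      rw [erVirtualValue, if_pos hz.2]
    rw [intervalIntegral.integral_congr_Ioo_of_le hc0.le hEq, intervalIntegral.integral_zero]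
  have hhigh : ∫ z in c..1, erVirtualValue vb z = vb / exp 1 := by
    have hEq : EqOn (erVirtualValue vb) (fun _ => vb) (Ioo c 1) := fun z hz => by
      rw [erVirtualValue, if_neg (not_lt.mpr hz.1.le)]
    rw [intervalIntegral.integral_congr_Ioo_of_le hc1.le hEq, intervalIntegral.integral_const,
      smul_eq_mul]
    simp only [c]
    ring
  rw [← intervalIntegral.integral_add_adjacent_intervals (intervalIntegrable_erVirtualValue vb 0 c)
    (intervalIntegrable_erVirtualValue vb c 1), hlow, hhigh, zero_add]

lemma integral_erVirtualValue_mul_le {vb : ℝ} (hvb : 0 ≤ vb) {q : ℝ → ℝ}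
    (hq : IntervalIntegrable q volume 0 1) (hq1 : ∀ z ∈ Icc (0:ℝ) 1, q z ≤ 1) :
    ∫ z in (0:ℝ)..1, erVirtualValue vb z * q z ≤ vb / exp 1 := by
  rw [← integral_erVirtualValue vb]
  refine intervalIntegral.integral_mono_on zero_le_one
    (hq.bdd_mul (measurable_erVirtualValue vb) (abs_erVirtualValue_le vb))
    (intervalIntegrable_erVirtualValue vb 0 1) fun z hz => ?_
  exact mul_le_of_le_one_right (erVirtualValue_nonneg hvb z) (hq1 z hz)

/-- Integration by parts against `x - b`, with the primitive absolutely continuous. -/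
theorem integral_primitive_eq {g : ℝ → ℝ} {a b : ℝ} (hg : IntervalIntegrable g volume a b) :
    ∫ z in a..b, ∫ s in a..z, g s = ∫ s in a..b, (b - s) * g s := by
  have hH := hg.absolutelyContinuousOnInterval_intervalIntegral (c := a) left_mem_uIcc
  have hL : AbsolutelyContinuousOnInterval (fun x => x - b) a b :=
    (IsometryEquiv.subRight b).isometry.lipschitz.lipschitzOnWith.absolutelyContinuousOnInterval
  have parts := hH.integral_mul_deriv_eq_deriv_mul hL
  simp only [deriv_sub_const, deriv_id'', mul_one, intervalIntegral.integral_same, zero_mul,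
    sub_self, mul_zero, zero_sub] at parts
  rw [parts, ← intervalIntegral.integral_neg]
  refine intervalIntegral.integral_congr_ae ?_
  filter_upwards [hg.ae_hasDerivAt_integral] with x hx hxab
  rw [(hx (uIoc_subset_uIcc hxab) a left_mem_uIcc).deriv]
  ring

theorem integral_sub_primitive {f g : ℝ → ℝ} {a b : ℝ} (hf : IntervalIntegrable f volume a b)
    (hg : IntervalIntegrable g volume a b) :
    ∫ z in a..b, (f z - ∫ s in a..z, g s) = ∫ s in a..b, (f s - (b - s) * g s) := by
  have hH : IntervalIntegrable (fun z => ∫ s in a..z, g s) volume a b :=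
    (hg.absolutelyContinuousOnInterval_intervalIntegral left_mem_uIcc).continuousOn
      |>.intervalIntegrable
  have hbg : IntervalIntegrable (fun s => (b - s) * g s) volume a b :=
    hg.continuousOn_mul (by fun_prop)
  rw [intervalIntegral.integral_sub hf hH, integral_primitive_eq hg,
    intervalIntegral.integral_sub hf hbg]

lemma IntervalIntegrable.fintype_sum {ι : Type*} [Fintype ι] {f : ι → ℝ → ℝ} {a b : ℝ}
    (hf : ∀ i, IntervalIntegrable (f i) volume a b) :
    IntervalIntegrable (fun z => ∑ i, f i z) volume a b := by
  simpa only [Finset.sum_fn] using IntervalIntegrable.sum Finset.univ fun i _ => hf i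

theorem integral_revenue_eq_sum_erVirtualValue {J : Type*} [Fintype J] {vbar : J → ℝ}
    (hv : ∀ j, 0 ≤ vbar j) {Q : J → ℝ → ℝ} (hQ : ∀ j, IntervalIntegrable (Q j) volume 0 1)
    (U0 : ℝ) :
    ∫ z in (0:ℝ)..1, (∑ j, erQuantile (vbar j) z * Q j z - U0
        - ∫ s in (0:ℝ)..z, ∑ j, erQuantileDeriv (vbar j) s * Q j s)
      = ∑ j, (∫ z in (0:ℝ)..1, erVirtualValue (vbar j) z * Q j z) - U0 := by
  have hφQ j : IntervalIntegrable (fun z => erQuantile (vbar j) z * Q j z) volume 0 1 :=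
    (hQ j).bdd_mul (measurable_erQuantile _) fun z => by
      rw [abs_of_nonneg (erQuantile_nonneg (hv j) z)]; exact erQuantile_le (hv j) z
  have hψQ j : IntervalIntegrable (fun z => erQuantileDeriv (vbar j) z * Q j z) volume 0 1 :=
    (hQ j).bdd_mul (measurable_erQuantileDeriv _) fun z => by
      rw [abs_of_nonneg (erQuantileDeriv_nonneg (hv j) z)]; exact erQuantileDeriv_le (hv j) z
  have hvQ j : IntervalIntegrable (fun z => erVirtualValue (vbar j) z * Q j z) volume 0 1 :=
    (hQ j).bdd_mul (measurable_erVirtualValue _) (abs_erVirtualValue_le _)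
  have hpointwise s : ∑ j, erQuantile (vbar j) s * Q j s - U0
      - (1 - s) * ∑ j, erQuantileDeriv (vbar j) s * Q j s
      = ∑ j, erVirtualValue (vbar j) s * Q j s - U0 := by
    simp only [← erQuantile_sub_mul_deriv, sub_mul, Finset.sum_sub_distrib, Finset.mul_sum,
      mul_assoc]
    ring
  rw [integral_sub_primitive ((IntervalIntegrable.fintype_sum hφQ).sub intervalIntegrable_const)
    (IntervalIntegrable.fintype_sum hψQ)]
  simp only [hpointwise]
  rw [intervalIntegral.integral_sub (IntervalIntegrable.fintype_sum hvQ) intervalIntegrable_const,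
    intervalIntegral.integral_finsetSum fun j _ => hvQ j, intervalIntegral.integral_const]
  simp

/-- the single-bidder regret lower bound of Proposition 2:
full surplus `∫_0^1 Σ_j φ_j(z) dz` minus expected revenue `∫_0^1 T(z) dz`
is at least `Σ_j v̄_j/e`. -/
theorem stmt_11 {J : Type*} [Fintype J] (vbar : J → ℝ) (hvbar : ∀ j, 0 < vbar j)
    (Q : J → ℝ → ℝ) (hQm : ∀ j, Measurable (Q j))
    (hQ : ∀ j, ∀ z ∈ Set.Icc (0:ℝ) 1, 0 ≤ Q j z ∧ Q j z ≤ 1)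
    (U0 : ℝ) (hU0 : 0 ≤ U0) (T : ℝ → ℝ)
    (hT : ∀ z, T z = (∑ j, erQuantile (vbar j) z * Q j z) - U0
      - ∫ s in (0:ℝ)..z, ∑ j, erQuantileDeriv (vbar j) s * Q j s) :
    (∑ j, vbar j / Real.exp 1) ≤
      (∫ z in (0:ℝ)..1, ∑ j, erQuantile (vbar j) z) - ∫ z in (0:ℝ)..1, T z := by
  have hv j := (hvbar j).le
  have hQi j : IntervalIntegrable (Q j) volume 0 1 :=
    intervalIntegrable_of_abs_le (hQm j) fun z hz => by
      have := hQ j z (Ioc_subset_Icc_self (by simpa [uIoc_of_le zero_le_one] using hz))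
      exact abs_le.mpr ⟨by linarith, this.2⟩
  have hrevenue : ∫ z in (0:ℝ)..1, T z
      = ∑ j, (∫ z in (0:ℝ)..1, erVirtualValue (vbar j) z * Q j z) - U0 := by
    simp_rw [hT]
    exact integral_revenue_eq_sum_erVirtualValue hv hQi U0
  have hbound := Finset.sum_le_sum fun j (_ : j ∈ Finset.univ) =>
    integral_erVirtualValue_mul_le (hv j) (hQi j) fun z hz => (hQ j z hz).2
  have hsurplus : ∫ z in (0:ℝ)..1, ∑ j, erQuantile (vbar j) z
      = ∑ j, vbar j / exp 1 + ∑ j, vbar j / exp 1 := by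
    rw [intervalIntegral.integral_finsetSum fun j _ => intervalIntegrable_erQuantile (hv j) 0 1,
      ← Finset.sum_add_distrib]
    exact Finset.sum_congr rfl fun j _ => by rw [integral_erQuantile (hv j)]; ring
  rw [hrevenue, hsurplus]
  linarith
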